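/- arXiv:2207.00736 — 6 statements merged into one kernel-verified Lean document; each statement's English description precedes it below -/
import Mathlib

section
/- Let n, m be positive integers and let r ∈ ℝ^n, c ∈ ℝ^m be vectors with nonnegative entries satisfying ‖r‖₁ ≤ 1 and ‖c‖₁ ≤ 1, and let μ > 0 be a real number such that μ·r has all integer entries and μ·c has all integer entries. If X ∈ ℝ^{n×m} satisfies X_{ij} ≥ 0 for all i,j, X·1 = r, and ‖Xᵀ·1 − c‖₁ ≤ 1/(2μ), then there exists a matrix X̂ ∈ ℝ^{n×m} with 0 ≤ X̂_{ij} ≤ X_{ij} for all i ∈ [n], j ∈ [m], such that X̂·1 = r/2 and X̂ᵀ·1 = c/2. -/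
/-!
By integrality, `∑ r = ∑ c`, and for `A ⊆ [n]`, `B ⊆ [m]` the excess `c(B) - r(Aᶜ)`, when
positive, is at least `1/μ`, while `X(A × B) ≥ c(B) - r(Aᶜ) - 1/(2μ)`. Halving absorbs the error:
`c(B)/2 ≤ r(Aᶜ)/2 + X(A × B)` for all cuts.

By Gale's supply–demand theorem this cut condition yields `0 ≤ Y ≤ X` with margins `(r/2, c/2)`.
Otherwise Hahn–Banach separates the target margins `(a, b)` from the compact convex image of the
box `[0, X]` by weights `(u, v)` with `⟪a, u⟫ + ⟪b, v⟫ > ∑ X_ij (u_i + v_j)⁺`; but integrating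
over `t` the cut conditions for `A = {i | t ≤ u i}`, `B = {j | -v j < t}` gives the reverse.
-/

open Finset MeasureTheory Set

section IntMul

variable {μ : ℝ}

lemma exists_int_mul_sum {ι : Type*} {f : ι → ℝ} (hf : ∀ i, ∃ k : ℤ, μ * f i = k)
    (s : Finset ι) : ∃ k : ℤ, μ * ∑ i ∈ s, f i = k := by
  choose g hg using hf
  exact ⟨∑ i ∈ s, g i, by simp [Finset.mul_sum, hg]⟩

lemma add_inv_le_of_lt_of_int_mul (hμ : 0 < μ) {a b : ℝ} (ha : ∃ k : ℤ, μ * a = k)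
    (hb : ∃ k : ℤ, μ * b = k) (hab : a < b) : a + μ⁻¹ ≤ b := by
  obtain ⟨k, hk⟩ := ha
  obtain ⟨l, hl⟩ := hb
  have hkl : k + 1 ≤ l := by
    have : (k : ℝ) < l := by rw [← hk, ← hl]; exact mul_lt_mul_of_pos_left hab hμ
    exact_mod_cast this
  have : μ * a + 1 ≤ μ * b := by rw [hk, hl]; exact_mod_cast hkl
  calc a + μ⁻¹ = μ⁻¹ * (μ * a + 1) := by field_simp
    _ ≤ μ⁻¹ * (μ * b) := by gcongr
    _ = b := by field_simp

lemma eq_of_abs_sub_lt_inv_of_int_mul (hμ : 0 < μ) {a b : ℝ} (ha : ∃ k : ℤ, μ * a = k)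
    (hb : ∃ k : ℤ, μ * b = k) (hab : |a - b| < μ⁻¹) : a = b := by
  rw [abs_lt] at hab
  by_contra hne
  rcases lt_or_gt_of_ne hne with hlt | hgt
  · linarith [add_inv_le_of_lt_of_int_mul hμ ha hb hlt]
  · linarith [add_inv_le_of_lt_of_int_mul hμ hb ha hgt]

end IntMul

section IndicatorIntegral

variable {α : Type*} {M : ℝ}

lemma integrable_indicator_one_Ioc (a b : ℝ) :
    Integrable ((Ioc a b).indicator (1 : ℝ → ℝ)) (volume.restrict (Ioc (-M) M)) :=
  (integrable_const (1 : ℝ)).indicator measurableSet_Ioc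

lemma integrable_sum_mul_indicator_Ioc (s : Finset α) (f l r : α → ℝ) :
    Integrable (fun t => ∑ k ∈ s, f k * (Ioc (l k) (r k)).indicator 1 t)
      (volume.restrict (Ioc (-M) M)) :=
  integrable_finsetSum _ fun _ _ =>
    (integrable_indicator_one_Ioc _ _).const_mul _

lemma integral_sum_mul_indicator_Ioc (s : Finset α) (f l r : α → ℝ) (hl : ∀ k, -M ≤ l k)
    (hr : ∀ k, r k ≤ M) :
    ∫ t, ∑ k ∈ s, f k * (Ioc (l k) (r k)).indicator 1 t ∂volume.restrict (Ioc (-M) M) =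
      ∑ k ∈ s, f k * max (r k - l k) 0 := by
  rw [integral_finsetSum _ fun _ _ =>
    (integrable_indicator_one_Ioc _ _).const_mul _]
  refine sum_congr rfl fun k _ => ?_
  rw [integral_const_mul, integral_indicator_one measurableSet_Ioc,
    measureReal_restrict_apply measurableSet_Ioc, inter_eq_left.2 (Ioc_subset_Ioc (hl k) (hr k)),
    Real.volume_real_Ioc]

lemma integral_sum_mul_indicator_Ioc_of_le (s : Finset α) (f l r : α → ℝ) (hl : ∀ k, -M ≤ l k)
    (hr : ∀ k, r k ≤ M) (hlr : ∀ k, l k ≤ r k) :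
    ∫ t, ∑ k ∈ s, f k * (Ioc (l k) (r k)).indicator 1 t ∂volume.restrict (Ioc (-M) M) =
      ∑ k ∈ s, f k * (r k - l k) := by
  simp_rw [integral_sum_mul_indicator_Ioc s f l r hl hr, max_eq_left (sub_nonneg.2 (hlr _))]

end IndicatorIntegral

section Gale

variable {ι κ : Type*} [Fintype ι] [Fintype κ]

def CutCondition [DecidableEq ι] (X : ι → κ → ℝ) (a : ι → ℝ) (b : κ → ℝ) : Prop :=
  ∀ (A : Finset ι) (B : Finset κ), ∑ j ∈ B, b j ≤ ∑ i ∈ Aᶜ, a i + ∑ i ∈ A, ∑ j ∈ B, X i j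

lemma CutCondition.sum_mul_indicator_le [DecidableEq ι] {X : ι → κ → ℝ} {a : ι → ℝ}
    {b : κ → ℝ} (h : CutCondition X a b) {u : ι → ℝ} {v : κ → ℝ} {M : ℝ} (hu : ∀ i, u i ≤ M)
    (hv : ∀ j, -M ≤ -v j) (t : ℝ) :
    ∑ i, a i * (Ioc (-M) (u i)).indicator 1 t + ∑ j, b j * (Ioc (-v j) M).indicator 1 t ≤
      ∑ i, a i + ∑ i, ∑ j, X i j * (Ioc (-v j) (u i)).indicator 1 t := by
  classical
  let A := univ.filter fun i => t ∈ Ioc (-M) (u i)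
  let B := univ.filter fun j => t ∈ Ioc (-v j) M
  have hA : ∑ i, a i * (Ioc (-M) (u i)).indicator 1 t = ∑ i ∈ A, a i := by
    simp [A, sum_filter, indicator_apply]
  have hB : ∑ j, b j * (Ioc (-v j) M).indicator 1 t = ∑ j ∈ B, b j := by
    simp [B, sum_filter, indicator_apply]
  have hAB : ∑ i, ∑ j, X i j * (Ioc (-v j) (u i)).indicator 1 t = ∑ i ∈ A, ∑ j ∈ B, X i j := by
    have hIoc i j : Ioc (-v j) (u i) = Ioc (-M) (u i) ∩ Ioc (-v j) M := by
      rw [Set.Ioc_inter_Ioc, max_eq_right (hv j), min_eq_left (hu i)]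
    simp [hIoc, A, B, sum_filter, indicator_apply, ite_and]
  rw [hA, hB, hAB]
  linarith [h A B, sum_compl_add_sum A a]

theorem CutCondition.sum_mul_add_sum_mul_le [DecidableEq ι] {X : ι → κ → ℝ} {a : ι → ℝ}
    {b : κ → ℝ} (h : CutCondition X a b) (hab : ∑ i, a i = ∑ j, b j) (u : ι → ℝ) (v : κ → ℝ) :
    ∑ i, a i * u i + ∑ j, b j * v j ≤ ∑ i, ∑ j, X i j * max (u i + v j) 0 := by
  set M := ∑ i, |u i| + ∑ j, |v j|
  have hM : 0 ≤ M := by positivity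
  have hu i : -M ≤ u i ∧ u i ≤ M := by
    refine abs_le.1 ((single_le_sum (fun i _ => abs_nonneg (u i)) (mem_univ i)).trans ?_)
    exact le_add_of_nonneg_right (by positivity)
  have hv j : -M ≤ -v j ∧ -v j ≤ M := by
    have := abs_le.1 ((single_le_sum (fun j _ => abs_nonneg (v j)) (mem_univ j)).trans
      (le_add_of_nonneg_left (by positivity) : ∑ j, |v j| ≤ M))
    constructor <;> linarith
  have hmono := integral_mono (μ := volume.restrict (Ioc (-M) M))
    ((integrable_sum_mul_indicator_Ioc _ _ _ _).add (integrable_sum_mul_indicator_Ioc _ _ _ _))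
    ((integrable_const _).add (integrable_finsetSum _ fun i _ =>
      integrable_sum_mul_indicator_Ioc _ _ _ _))
    (h.sum_mul_indicator_le (fun i => (hu i).2) fun j => (hv j).1)
  simp only [Pi.add_apply] at hmono
  rw [integral_add (integrable_sum_mul_indicator_Ioc _ _ _ _)
      (integrable_sum_mul_indicator_Ioc _ _ _ _),
    integral_sum_mul_indicator_Ioc_of_le _ _ _ _ (fun _ => le_rfl) (fun i => (hu i).2)
      fun i => (hu i).1,
    integral_sum_mul_indicator_Ioc_of_le _ _ _ _ (fun j => (hv j).1) (fun _ => le_rfl)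
      fun j => (hv j).2,
    integral_add (integrable_const _) (integrable_finsetSum _ fun i _ =>
      integrable_sum_mul_indicator_Ioc _ _ _ _),
    integral_const, integral_finsetSum _ fun i _ => integrable_sum_mul_indicator_Ioc _ _ _ _]
    at hmono
  have hX i : ∫ t, ∑ j, X i j * (Ioc (-v j) (u i)).indicator 1 t ∂volume.restrict (Ioc (-M) M) =
      ∑ j, X i j * max (u i + v j) 0 := by
    rw [integral_sum_mul_indicator_Ioc _ _ _ _ (fun j => (hv j).1) fun _ => (hu i).2]
    simp only [sub_neg_eq_add]
  rw [measureReal_restrict_apply_univ, Real.volume_real_Ioc_of_le (by linarith), smul_eq_mul,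
    sum_congr rfl fun i _ => hX i] at hmono
  simp only [sub_neg_eq_add, mul_add, sum_add_distrib, ← sum_mul, ← hab] at hmono
  linarith

def margins : (ι → κ → ℝ) →ₗ[ℝ] (ι ⊕ κ → ℝ) where
  toFun Y := Sum.elim (fun i => ∑ j, Y i j) fun j => ∑ i, Y i j
  map_add' Y Z := by ext (i | j) <;> simp [sum_add_distrib]
  map_smul' s Y := by ext (i | j) <;> simp [mul_sum]

lemma sum_margins_mul (Y : ι → κ → ℝ) (w : ι ⊕ κ → ℝ) :
    ∑ k, margins Y k * w k = ∑ i, ∑ j, Y i j * (w (.inl i) + w (.inr j)) := by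
  simp only [margins, LinearMap.coe_mk, AddHom.coe_mk, Fintype.sum_sum_type, Sum.elim_inl,
    Sum.elim_inr, sum_mul, mul_add, sum_add_distrib]
  rw [sum_comm (γ := κ)]

theorem CutCondition.exists_le_margins_eq [DecidableEq ι] {X : ι → κ → ℝ} {a : ι → ℝ}
    {b : κ → ℝ} (hX : ∀ i j, 0 ≤ X i j) (h : CutCondition X a b) (hab : ∑ i, a i = ∑ j, b j) :
    ∃ Y : ι → κ → ℝ, (∀ i j, 0 ≤ Y i j ∧ Y i j ≤ X i j) ∧ (∀ i, ∑ j, Y i j = a i) ∧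
      ∀ j, ∑ i, Y i j = b j := by
  classical
  suffices Sum.elim a b ∈ margins '' Icc 0 X by
    obtain ⟨Y, ⟨hY₀, hYX⟩, hY⟩ := this
    exact ⟨Y, fun i j => ⟨hY₀ i j, hYX i j⟩, fun i => congrFun hY (.inl i),
      fun j => congrFun hY (.inr j)⟩
  by_contra hnot
  obtain ⟨f, α, hfK, hfab⟩ := geometric_hahn_banach_closed_point
    ((convex_Icc 0 X).linear_image margins)
    (isCompact_Icc.image margins.continuous_of_finiteDimensional).isClosed hnot
  let w k := f fun k' => if k = k' then 1 else 0
  have hf x : f x = ∑ k, x k * w k := LinearMap.pi_apply_eq_sum_univ f.toLinearMap x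
  -- `Y` maximizes `f ∘ margins` on the box `Icc 0 X`.
  let Y i j := if 0 < w (.inl i) + w (.inr j) then X i j else 0
  have hY : Y ∈ Icc 0 X := by
    constructor <;> intro i j <;> by_cases hpos : 0 < w (.inl i) + w (.inr j) <;>
      simp [Y, hpos, hX i j]
  have hfY : f (margins Y) = ∑ i, ∑ j, X i j * max (w (.inl i) + w (.inr j)) 0 := by
    rw [hf, sum_margins_mul]
    refine sum_congr rfl fun i _ => sum_congr rfl fun j _ => ?_
    by_cases hpos : 0 < w (.inl i) + w (.inr j)
    · simp [Y, hpos, max_eq_left hpos.le]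
    · simp [Y, hpos, max_eq_right (not_lt.1 hpos)]
  have hfab' : f (Sum.elim a b) = ∑ i, a i * w (.inl i) + ∑ j, b j * w (.inr j) := by
    rw [hf, Fintype.sum_sum_type]
    rfl
  linarith [hfK _ ⟨Y, hY, rfl⟩,
    h.sum_mul_add_sum_mul_le hab (fun i => w (.inl i)) fun j => w (.inr j)]

end Gale

section ApproximateMargins

variable {ι κ : Type*} [Fintype ι] [Fintype κ] {X : Matrix ι κ ℝ} {r : ι → ℝ} {c : κ → ℝ}

lemma abs_sum_sub_sum_le_sum_abs_sum_sub (hrow : ∀ i, ∑ j, X i j = r i) :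
    |∑ i, r i - ∑ j, c j| ≤ ∑ j, |∑ i, X i j - c j| := by
  calc |∑ i, r i - ∑ j, c j| = |∑ j, (∑ i, X i j - c j)| := by
        rw [sum_sub_distrib, ← funext hrow, sum_comm]
    _ ≤ ∑ j, |∑ i, X i j - c j| := abs_sum_le_sum_abs _ _

lemma sum_sub_sum_compl_sub_le_sum_sum [DecidableEq ι] (hX : ∀ i j, 0 ≤ X i j)
    (hrow : ∀ i, ∑ j, X i j = r i) (A : Finset ι) (B : Finset κ) :
    ∑ j ∈ B, c j - ∑ i ∈ Aᶜ, r i - ∑ j, |∑ i, X i j - c j| ≤ ∑ i ∈ A, ∑ j ∈ B, X i j := by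
  have hcol : ∑ j ∈ B, c j - ∑ j, |∑ i, X i j - c j| ≤ ∑ j ∈ B, ∑ i, X i j := by
    have : ∑ j ∈ B, (c j - ∑ i, X i j) ≤ ∑ j, |∑ i, X i j - c j| :=
      calc ∑ j ∈ B, (c j - ∑ i, X i j) ≤ ∑ j ∈ B, |∑ i, X i j - c j| :=
            sum_le_sum fun j _ => by rw [abs_sub_comm]; exact le_abs_self _
        _ ≤ ∑ j, |∑ i, X i j - c j| :=
            sum_le_sum_of_subset_of_nonneg (subset_univ B) fun j _ _ => abs_nonneg _
    rw [sum_sub_distrib] at this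
    linarith
  have hcompl : ∑ i ∈ Aᶜ, ∑ j ∈ B, X i j ≤ ∑ i ∈ Aᶜ, r i :=
    sum_le_sum fun i _ => hrow i ▸
      sum_le_sum_of_subset_of_nonneg (subset_univ B) fun j _ _ => hX i j
  have hsplit : ∑ j ∈ B, ∑ i, X i j = ∑ i ∈ A, ∑ j ∈ B, X i j + ∑ i ∈ Aᶜ, ∑ j ∈ B, X i j := by
    rw [sum_comm, sum_add_sum_compl]
  linarith

lemma cutCondition_half [DecidableEq ι] {μ : ℝ} (hμ : 0 < μ)
    (hrint : ∀ i, ∃ k : ℤ, μ * r i = k) (hcint : ∀ j, ∃ k : ℤ, μ * c j = k)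
    (hX : ∀ i j, 0 ≤ X i j) (hrow : ∀ i, ∑ j, X i j = r i)
    (hcol : ∑ j, |∑ i, X i j - c j| ≤ 1 / (2 * μ)) :
    CutCondition X (fun i => r i / 2) fun j => c j / 2 := by
  intro A B
  have hcut := sum_sub_sum_compl_sub_le_sum_sum (c := c) hX hrow A B
  have hXAB : 0 ≤ ∑ i ∈ A, ∑ j ∈ B, X i j := sum_nonneg fun i _ => sum_nonneg fun j _ => hX i j
  rw [← sum_div, ← sum_div]
  rcases le_or_gt (∑ j ∈ B, c j) (∑ i ∈ Aᶜ, r i) with hle | hlt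
  · linarith
  · have hgap := add_inv_le_of_lt_of_int_mul hμ (exists_int_mul_sum hrint Aᶜ)
      (exists_int_mul_sum hcint B) hlt
    have : 1 / (2 * μ) = μ⁻¹ / 2 := by field_simp
    linarith

end ApproximateMargins

theorem stmt_1_general (n m : ℕ)
    (r : Fin n → ℝ) (c : Fin m → ℝ)
    (μ : ℝ) (hμ : 0 < μ)
    (hrint : ∀ i, ∃ k : ℤ, μ * r i = k) (hcint : ∀ j, ∃ k : ℤ, μ * c j = k)
    (X : Matrix (Fin n) (Fin m) ℝ) (hXnn : ∀ i j, 0 ≤ X i j)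
    (hXrow : ∀ i, ∑ j, X i j = r i)
    (hXcol : ∑ j, |(∑ i, X i j) - c j| ≤ 1 / (2 * μ)) :
    ∃ Xhat : Matrix (Fin n) (Fin m) ℝ,
      (∀ i j, 0 ≤ Xhat i j ∧ Xhat i j ≤ X i j) ∧
      (∀ i, ∑ j, Xhat i j = r i / 2) ∧ (∀ j, ∑ i, Xhat i j = c j / 2) := by
  have hε : 1 / (2 * μ) < μ⁻¹ := by
    rw [one_div, mul_inv]
    linarith [inv_pos.2 hμ]
  have hsum : ∑ i, r i = ∑ j, c j :=
    eq_of_abs_sub_lt_inv_of_int_mul hμ (exists_int_mul_sum hrint _) (exists_int_mul_sum hcint _)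
      ((abs_sum_sub_sum_le_sum_abs_sum_sub hXrow).trans_lt (hXcol.trans_lt hε))
  exact (cutCondition_half hμ hrint hcint hXnn hXrow hXcol).exists_le_margins_eq hXnn
    (by simp only [← sum_div, hsum])

/-- An approximately feasible `X` contains half of a truly feasible solution. -/
theorem stmt_1 (n m : ℕ) (hn : 0 < n) (hm : 0 < m)
    (r : Fin n → ℝ) (c : Fin m → ℝ)
    (hr : ∀ i, 0 ≤ r i) (hc : ∀ j, 0 ≤ c j)
    (hr1 : ∑ i, |r i| ≤ 1) (hc1 : ∑ j, |c j| ≤ 1)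
    (μ : ℝ) (hμ : 0 < μ)
    (hrint : ∀ i, ∃ k : ℤ, μ * r i = k) (hcint : ∀ j, ∃ k : ℤ, μ * c j = k)
    (X : Matrix (Fin n) (Fin m) ℝ) (hXnn : ∀ i j, 0 ≤ X i j)
    (hXrow : ∀ i, ∑ j, X i j = r i)
    (hXcol : ∑ j, |(∑ i, X i j) - c j| ≤ 1 / (2 * μ)) :
    ∃ Xhat : Matrix (Fin n) (Fin m) ℝ,
      (∀ i j, 0 ≤ Xhat i j ∧ Xhat i j ≤ X i j) ∧
      (∀ i, ∑ j, Xhat i j = r i / 2) ∧ (∀ j, ∑ i, Xhat i j = c j / 2) :=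
  stmt_1_general n m r c μ hμ hrint hcint X hXnn hXrow hXcol
end

section
/- Let n, m be positive integers, E ⊆ [n] × [m], and let p ∈ ℤ^n, q ∈ ℤ^m be vectors with nonnegative integer entries satisfying Σ_{i∈[n]} p_i = Σ_{j∈[m]} q_j. For S ⊆ [n] define the neighborhood N(S) = {t ∈ [m] : ∃ s ∈ S, (s,t) ∈ E}. If for every subset S ⊆ [n] one has Σ_{s∈S} p_s ≤ Σ_{t∈N(S)} q_t, then there exists a matrix Z ∈ ℝ^{n×m} with Z_{ij} ≥ 0 for all i,j, Z_{ij} = 0 whenever (i,j) ∉ E, Z·1 = p, and Zᵀ·1 = q. -/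
/-!
Split source `i` into `p i` unit sources and sink `j` into `q j` unit sinks, a unit source
being adjacent to the unit sinks of the neighbours of `i`. A set `A` of unit sources covers
sources `S`, at most `∑ i ∈ S, p i` of them, and sees every unit sink above `N(S)`, so the
weighted Hall condition gives the unweighted one. Hall's theorem yields a matching of the unit
sources into the unit sinks, perfect since both have `∑ p = ∑ q` elements, and `Z i j` counts
the units of `i` matched to units of `j`.
-/

open scoped Classical

open Finset

section SigmaFin

variable {ι : Type*} [Fintype ι] [DecidableEq ι] (k : ι → ℕ)

lemma card_filter_sigma_fst_mem (T : Finset ι) :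
    #{x : Σ i, Fin (k i) | x.1 ∈ T} = ∑ i ∈ T, k i := by
  have : ({x : Σ i, Fin (k i) | x.1 ∈ T} : Finset _) = T.sigma fun _ => univ := by
    ext x
    simp
  rw [this, card_sigma]
  simp

lemma card_filter_sigma_fst_eq (i : ι) : #{x : Σ i, Fin (k i) | x.1 = i} = k i := by
  simpa using card_filter_sigma_fst_mem k {i}

end SigmaFin

section WeightedHall

variable {α β : Type*} [Fintype β] [DecidableEq α] [DecidableEq β]
  (r : α → β → Prop) [DecidableRel r] (p : α → ℕ) (q : β → ℕ)

lemma card_le_card_biUnion_sigma_of_hall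
    (hall : ∀ S : Finset α, ∑ i ∈ S, p i ≤ ∑ j ∈ univ.filter (fun j => ∃ i ∈ S, r i j), q j)
    (A : Finset (Σ i, Fin (p i))) :
    #A ≤ #(A.biUnion fun x => {y : Σ j, Fin (q j) | r x.1 y.1}) := by
  set S := A.image Sigma.fst
  calc #A ≤ #(S.sigma fun i => (univ : Finset (Fin (p i)))) :=
        card_le_card fun x hx => by simpa [S] using ⟨x.2, hx⟩
    _ = ∑ i ∈ S, p i := by simp [card_sigma]
    _ ≤ ∑ j ∈ univ.filter (fun j => ∃ i ∈ S, r i j), q j := hall S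
    _ = #{y : Σ j, Fin (q j) | y.1 ∈ univ.filter (fun j => ∃ i ∈ S, r i j)} :=
        (card_filter_sigma_fst_mem q _).symm
    _ ≤ #(A.biUnion fun x => {y : Σ j, Fin (q j) | r x.1 y.1}) :=
        card_le_card fun y hy => by simpa [S] using hy

variable [Fintype α]

lemma exists_equiv_sigma_of_hall (hsum : ∑ i, p i = ∑ j, q j)
    (hall : ∀ S : Finset α, ∑ i ∈ S, p i ≤ ∑ j ∈ univ.filter (fun j => ∃ i ∈ S, r i j), q j) :
    ∃ e : (Σ i, Fin (p i)) ≃ (Σ j, Fin (q j)), ∀ x, r x.1 (e x).1 := by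
  obtain ⟨f, hf_inj, hf_adj⟩ := (all_card_le_biUnion_card_iff_existsInjective' _).mp
    (card_le_card_biUnion_sigma_of_hall r p q hall)
  have hcard : Fintype.card (Σ i, Fin (p i)) = Fintype.card (Σ j, Fin (q j)) := by
    simpa using hsum
  have hf_bij := (Fintype.bijective_iff_injective_and_card f).mpr ⟨hf_inj, hcard⟩
  exact ⟨Equiv.ofBijective f hf_bij, fun x => by simpa using hf_adj x⟩

theorem exists_nat_matrix_of_hall (hsum : ∑ i, p i = ∑ j, q j)
    (hall : ∀ S : Finset α, ∑ i ∈ S, p i ≤ ∑ j ∈ univ.filter (fun j => ∃ i ∈ S, r i j), q j) :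
    ∃ Z : α → β → ℕ, (∀ i j, ¬ r i j → Z i j = 0) ∧
      (∀ i, ∑ j, Z i j = p i) ∧ (∀ j, ∑ i, Z i j = q j) := by
  obtain ⟨e, he⟩ := exists_equiv_sigma_of_hall r p q hsum hall
  refine ⟨fun i j => #{x : Σ i, Fin (p i) | x.1 = i ∧ (e x).1 = j}, ?_, ?_, ?_⟩
  · intro i j hij
    refine card_eq_zero.mpr (filter_eq_empty_iff.mpr ?_)
    rintro x - ⟨rfl, rfl⟩
    exact hij (he x)
  · intro i
    rw [← card_filter_sigma_fst_eq p i, card_eq_sum_card_fiberwise (f := fun x => (e x).1)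
      (t := univ) fun _ _ => mem_univ _]
    simp only [filter_filter]
  · intro j
    have hfiber : #{x : Σ i, Fin (p i) | (e x).1 = j} = q j := by
      rw [← card_filter_sigma_fst_eq q j, ← card_map e.toEmbedding, map_filter]
      simp
    rw [← hfiber, card_eq_sum_card_fiberwise (f := Sigma.fst) (t := univ) fun _ _ => mem_univ _]
    simp only [filter_filter, and_comm]

end WeightedHall

theorem stmt_2_general (n m : ℕ)
    (E : Set (Fin n × Fin m)) (p : Fin n → ℤ) (q : Fin m → ℤ)
    (hp : ∀ i, 0 ≤ p i) (hq : ∀ j, 0 ≤ q j)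
    (hsum : ∑ i, p i = ∑ j, q j)
    (hall : ∀ S : Finset (Fin n),
      ∑ s ∈ S, p s ≤
        ∑ t ∈ Finset.univ.filter (fun t => ∃ s ∈ S, (s, t) ∈ E), q t) :
    ∃ Z : Matrix (Fin n) (Fin m) ℝ,
      (∀ i j, 0 ≤ Z i j) ∧
      (∀ i j, (i, j) ∉ E → Z i j = 0) ∧
      (∀ i, ∑ j, Z i j = (p i : ℝ)) ∧
      (∀ j, ∑ i, Z i j = (q j : ℝ)) := by
  have hp' : ∀ i, ((p i).toNat : ℤ) = p i := fun i => Int.toNat_of_nonneg (hp i)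
  have hq' : ∀ j, ((q j).toNat : ℤ) = q j := fun j => Int.toNat_of_nonneg (hq j)
  obtain ⟨Z, hZE, hZrow, hZcol⟩ := exists_nat_matrix_of_hall (fun i j => (i, j) ∈ E)
    (fun i => (p i).toNat) (fun j => (q j).toNat)
    (by zify; simpa only [hp', hq'] using hsum)
    (fun S => by zify; simp only [hp', hq']; convert hall S)
  refine ⟨fun i j => Z i j, fun i j => Nat.cast_nonneg _, fun i j hij => by simp [hZE i j hij],
    fun i => ?_, fun j => ?_⟩
  · rw [← hp' i, Int.cast_natCast, ← hZrow i, Nat.cast_sum]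
  · rw [← hq' j, Int.cast_natCast, ← hZcol j, Nat.cast_sum]

/-- Hall's marriage theorem for weighted (integer) sources and sinks. -/
theorem stmt_2 (n m : ℕ) (hn : 0 < n) (hm : 0 < m)
    (E : Set (Fin n × Fin m)) (p : Fin n → ℤ) (q : Fin m → ℤ)
    (hp : ∀ i, 0 ≤ p i) (hq : ∀ j, 0 ≤ q j)
    (hsum : ∑ i, p i = ∑ j, q j)
    (hall : ∀ S : Finset (Fin n),
      ∑ s ∈ S, p s ≤
        ∑ t ∈ Finset.univ.filter (fun t => ∃ s ∈ S, (s, t) ∈ E), q t) :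
    ∃ Z : Matrix (Fin n) (Fin m) ℝ,
      (∀ i j, 0 ≤ Z i j) ∧
      (∀ i j, (i, j) ∉ E → Z i j = 0) ∧
      (∀ i, ∑ j, Z i j = (p i : ℝ)) ∧
      (∀ j, ∑ i, Z i j = (q j : ℝ)) :=
  stmt_2_general n m E p q hp hq hsum hall
end

section
/- Let n, m be positive integers, let X̄ ∈ ℝ^{n×m} have nonnegative entries, and let p ∈ ℤ^n, q ∈ ℤ^m be integer vectors with nonnegative entries. Suppose X̄·1 = p and ‖X̄ᵀ·1 − q‖₁ < 1. Let E = {(i,j) : X̄_{ij} > 0} and for S ⊆ [n] let N(S) = {t ∈ [m] : ∃ s ∈ S, (s,t) ∈ E}. Then for every subset S ⊆ [n], Σ_{s∈S} p_s ≤ Σ_{t∈N(S)} q_t. -/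
/-- The support of an approximately column-feasible matrix with integral
row sums and near-integral column sums satisfies the weighted Hall condition. -/
theorem stmt_3 (n m : ℕ) (hn : 0 < n) (hm : 0 < m)
    (X : Matrix (Fin n) (Fin m) ℝ) (hXnn : ∀ i j, 0 ≤ X i j)
    (p : Fin n → ℤ) (q : Fin m → ℤ)
    (hp : ∀ i, 0 ≤ p i) (hq : ∀ j, 0 ≤ q j)
    (hrow : ∀ i, ∑ j, X i j = (p i : ℝ))
    (hcol : ∑ j, |(∑ i, X i j) - (q j : ℝ)| < 1) :
    ∀ S : Finset (Fin n),
      ∑ s ∈ S, p s ≤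
        ∑ t ∈ Finset.univ.filter (fun t => ∃ s ∈ S, 0 < X s t), q t := by
  intro S
  set T := Finset.univ.filter (fun t => ∃ s ∈ S, 0 < X s t) with hT
  -- real inequality: ∑_{s∈S} p s < ∑_{t∈T} q t + 1
  have key : ((∑ s ∈ S, p s : ℤ) : ℝ) < ((∑ t ∈ T, q t : ℤ) : ℝ) + 1 := by
    push_cast
    have hz : ∀ t ∈ Finset.univ, t ∉ T → ∑ s ∈ S, X s t = 0 := by
      intro t _ ht
      simp only [hT, Finset.mem_filter, Finset.mem_univ, true_and] at ht
      push_neg at ht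
      exact Finset.sum_eq_zero fun s hs => le_antisymm (ht s hs) (hXnn s t)
    have h1 : ∑ t ∈ T, ∑ s ∈ S, X s t = ∑ s ∈ S, (p s : ℝ) := by
      rw [Finset.sum_subset (Finset.subset_univ T) hz, Finset.sum_comm]
      exact Finset.sum_congr rfl fun s _ => hrow s
    rw [← h1]
    have h2 : ∀ t ∈ T, ∑ s ∈ S, X s t ≤ (q t : ℝ) + |(∑ i, X i t) - (q t : ℝ)| := by
      intro t _
      have : ∑ s ∈ S, X s t ≤ ∑ i, X i t :=
        Finset.sum_le_sum_of_subset_of_nonneg (Finset.subset_univ S)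
          (fun i _ _ => hXnn i t)
      calc ∑ s ∈ S, X s t ≤ ∑ i, X i t := this
        _ ≤ (q t : ℝ) + |(∑ i, X i t) - (q t : ℝ)| := by
            have := le_abs_self ((∑ i, X i t) - (q t : ℝ)); linarith
    calc ∑ t ∈ T, ∑ s ∈ S, X s t
        ≤ ∑ t ∈ T, ((q t : ℝ) + |(∑ i, X i t) - (q t : ℝ)|) := Finset.sum_le_sum h2
      _ = (∑ t ∈ T, (q t : ℝ)) + ∑ t ∈ T, |(∑ i, X i t) - (q t : ℝ)| := by
            rw [Finset.sum_add_distrib]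
      _ ≤ (∑ t ∈ T, (q t : ℝ)) + ∑ j, |(∑ i, X i j) - (q j : ℝ)| := by
            have := Finset.sum_le_sum_of_subset_of_nonneg (f := fun j => |(∑ i, X i j) - (q j : ℝ)|)
              (Finset.subset_univ T) (fun j _ _ => abs_nonneg _)
            linarith
      _ < (∑ t ∈ T, (q t : ℝ)) + 1 := by linarith
  have : (∑ s ∈ S, p s) < (∑ t ∈ T, q t) + 1 := by exact_mod_cast key
  omega
end

section
/- Let n, m be positive integers, Q ∈ ℝ^{n×m}, and let r ∈ ℝ^n, c ∈ ℝ^m have strictly positive entries with ‖r‖₁ = ‖c‖₁, ‖r‖_∞ ≤ 1, ‖c‖_∞ ≤ 1. Let μ ≥ 1 be a real number such that μ·r and μ·c have all integer entries. Suppose η > 0, α ∈ ℝ^n, β ∈ ℝ^m, and the matrix X with X_{ij} = exp(η(α_i + β_j − Q_{ij})) satisfies X_{ij} ≤ 1 for all i,j, X·1 = r, and ‖Xᵀ·1 − c‖₁ ≤ 1/(2μ). Then, writing D = Σ_{i∈[n]} r_i α_i + Σ_{j∈[m]} c_j β_j, the duality gap satisfies OPT − D ≤ 2η⁻¹‖r‖₁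 log(mμ). -/
/-!
Round the almost feasible scaling `X` to an exact transport plan `Z` supported on the entries with
`X i j ≥ (m μ)⁻²`. On such an entry `Q i j ≤ α i + β j + 2 log (m μ) / η`, so `Z` costs at most
`D + 2 η⁻¹ ‖r‖₁ log (m μ)`, and this bounds `OPT`.

`Z` comes from Hall's theorem applied to `μ r i` copies of row `i` and `μ c j` copies of column `j`.
If a set `A` of rows violated Hall's condition for its neighbourhood `N`, integrality would give
`r(A) ≥ c(N) + 1/μ`; as the column marginals of `X` are off by at most `1/(2μ)`, at least `1/(2μ)`
of the mass of `X` would then sit on `A × Nᶜ`, where every entry is below `(m μ)⁻²`. The counts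
`|A| ≤ μ r(A)`, `|Nᶜ| ≤ m - c(N)` and `|Nᶜ| ≤ m - 1` make this impossible.
-/

open Finset Real

theorem card_filter_sigma_fst_eq_s4 {ι : Type*} [Fintype ι] [DecidableEq ι] (k : ι → ℕ) (i : ι) :
    #{p : Σ i, Fin (k i) | p.1 = i} = k i := by
  rw [show ({p | p.1 = i} : Finset (Σ i, Fin (k i))) = ({i} : Finset ι).sigma fun _ => univ by
    ext p; simp [eq_comm]]
  simp

theorem exists_nat_matrix_of_hall_s4 {ι κ : Type*} [Fintype ι] [Fintype κ] [DecidableEq κ]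
    (t : ι → Finset κ) (k : ι → ℕ) (l : κ → ℕ) (hkl : ∑ i, k i = ∑ j, l j)
    (hall : ∀ A : Finset ι, ∑ i ∈ A, k i ≤ ∑ j ∈ A.biUnion t, l j) :
    ∃ Y : Matrix ι κ ℕ, (∀ i, ∑ j, Y i j = k i) ∧ (∀ j, ∑ i, Y i j = l j) ∧
      ∀ i j, Y i j ≠ 0 → j ∈ t i := by
  classical
  let T : (Σ i, Fin (k i)) → Finset (Σ j, Fin (l j)) := fun p => (t p.1).sigma fun _ => univ
  have hT : ∀ s, #s ≤ #(s.biUnion T) := by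
    intro s
    have hs : s ⊆ (s.image Sigma.fst).sigma fun _ => univ := fun p hp => by
      simpa using ⟨p.2, hp⟩
    have hsT : s.biUnion T = ((s.image Sigma.fst).biUnion t).sigma fun _ => univ := by
      ext q; simp [T]
    calc #s ≤ ∑ i ∈ s.image Sigma.fst, k i := by simpa using card_le_card hs
      _ ≤ ∑ j ∈ (s.image Sigma.fst).biUnion t, l j := hall _
      _ = #(s.biUnion T) := by simp [hsT]
  obtain ⟨f, hf_inj, hf_mem⟩ := (all_card_le_biUnion_card_iff_exists_injective T).1 hT
  have hf_bij : Function.Bijective f :=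
    (Fintype.bijective_iff_injective_and_card f).2 ⟨hf_inj, by simp [hkl]⟩
  refine ⟨fun i j => #{p | p.1 = i ∧ (f p).1 = j}, fun i => ?_, fun j => ?_, fun i j hij => ?_⟩
  · rw [← card_filter_sigma_fst_eq_s4 k i, card_eq_sum_card_fiberwise (f := fun p => (f p).1)
      (t := univ) (fun _ _ => mem_coe.2 (mem_univ _))]
    simp only [filter_filter]
  · have hfib : #{p | (f p).1 = j} = #{q : Σ j, Fin (l j) | q.1 = j} :=
      card_equiv (Equiv.ofBijective f hf_bij) (by simp)
    rw [← card_filter_sigma_fst_eq_s4 l j, ← hfib, card_eq_sum_card_fiberwise (f := Sigma.fst)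
      (t := univ) (fun _ _ => mem_coe.2 (mem_univ _))]
    simp only [filter_filter, and_comm]
  · obtain ⟨p, hp⟩ := card_ne_zero.1 hij
    simp only [mem_filter, mem_univ, true_and] at hp
    simpa [T, hp.1, hp.2] using hf_mem p

-- `a = r(A)`, `s = r(A) - c(N)` and `q = |Nᶜ|` for a set of rows `A` violating Hall's condition.
theorem mul_le_sq_mul_of_deficit {m : ℕ} {μ s a q : ℝ} (hμ : 1 ≤ μ) (hs : 1 ≤ μ * s)
    (hsa : s ≤ a) (ham : a ≤ m) (hq : 0 ≤ q) (hqm : q ≤ m - 1) (hqa : q ≤ m - a + s) :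
    a * q ≤ m ^ 2 * (μ * s - 1 / 2) := by
  have hs0 : 0 ≤ s := by nlinarith
  rcases le_or_gt m 2 with hm | hm
  · have hm' : (m : ℝ) ≤ 2 := by exact_mod_cast hm
    calc a * q ≤ m * (m - 1) := mul_le_mul ham hqm hq (by linarith)
      _ ≤ m ^ 2 * (1 - 1 / 2) := by nlinarith
      _ ≤ m ^ 2 * (μ * s - 1 / 2) := by gcongr
  · have hm' : (3 : ℝ) ≤ m := by exact_mod_cast hm
    have hm3 : 0 ≤ (m : ℝ) * (m - 3) := by nlinarith
    have hmt : 0 ≤ (m : ℝ) * (4 * m - 3) * (μ * s - 1) := by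
      apply mul_nonneg <;> nlinarith
    have hst : s ≤ μ * s := le_mul_of_one_le_left hs0 hμ
    calc a * q ≤ a * (m - a + s) := mul_le_mul_of_nonneg_left hqa (by linarith)
      _ ≤ (m + s) ^ 2 / 4 := by nlinarith [sq_nonneg (m + s - 2 * a)]
      _ ≤ (m ^ 2 + 3 * m * (μ * s)) / 4 := by
        nlinarith [mul_le_mul (hsa.trans ham) hst hs0 (by linarith)]
      _ ≤ m ^ 2 * (μ * s - 1 / 2) := by nlinarith

theorem card_le_mul_sum {ι : Type*} {r : ι → ℝ} {μ : ℝ} (hr : ∀ i, 1 ≤ μ * r i) (A : Finset ι) :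
    (#A : ℝ) ≤ μ * ∑ i ∈ A, r i := by
  rw [mul_sum]
  simpa using sum_le_sum fun i (_ : i ∈ A) => hr i

section

variable {ι κ : Type*} [Fintype ι] [Fintype κ]

theorem sum_lt_of_forall_block_lt {X : Matrix ι κ ℝ} {r : ι → ℝ} {c : κ → ℝ} {ε θ : ℝ}
    (hX : ∀ i j, 0 ≤ X i j) (hXrow : ∀ i, ∑ j, X i j = r i)
    (hXcol : ∑ j, |∑ i, X i j - c j| ≤ ε) {A : Finset ι} {B : Finset κ} (hA : A.Nonempty)
    (hB : B.Nonempty) (hAB : ∀ i ∈ A, ∀ j ∈ B, X i j < θ) :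
    ∑ j ∈ B, c j < #A * #B * θ + (∑ i, r i - ∑ i ∈ A, r i) + ε := by
  classical
  have hcol : ∑ j ∈ B, c j ≤ ∑ j ∈ B, ∑ i, X i j + ε :=
    calc ∑ j ∈ B, c j ≤ ∑ j ∈ B, (∑ i, X i j + |∑ i, X i j - c j|) :=
          sum_le_sum fun j _ => by linarith [neg_abs_le (∑ i, X i j - c j)]
      _ ≤ ∑ j ∈ B, ∑ i, X i j + ε := by
        rw [sum_add_distrib]
        gcongr
        exact (sum_le_sum_of_subset_of_nonneg (subset_univ B) fun j _ _ => abs_nonneg _).trans hXcol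
  have hblock : ∑ i ∈ A, ∑ j ∈ B, X i j < #A * #B * θ :=
    calc ∑ i ∈ A, ∑ j ∈ B, X i j < ∑ i ∈ A, ∑ j ∈ B, θ :=
          sum_lt_sum_of_nonempty hA fun i hi => sum_lt_sum_of_nonempty hB (hAB i hi)
      _ = #A * #B * θ := by simp [mul_assoc]
  have hcompl : ∑ i ∈ Aᶜ, ∑ j ∈ B, X i j ≤ ∑ i ∈ Aᶜ, r i := sum_le_sum fun i _ => by
    rw [← hXrow i]
    exact sum_le_sum_of_subset_of_nonneg (subset_univ B) fun j _ _ => hX i j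
  rw [sum_comm, ← sum_add_sum_compl A] at hcol
  rw [← sum_compl_add_sum A r]
  linarith

theorem card_compl_le_sub_sum [DecidableEq κ] {c : κ → ℝ} (hc : ∀ j, c j ≤ 1) (N : Finset κ) :
    (#Nᶜ : ℝ) ≤ Fintype.card κ - ∑ j ∈ N, c j := by
  have hN : ∑ j ∈ N, c j ≤ #N := by simpa using sum_le_card_nsmul N c 1 fun j _ => hc j
  have hcard : (#Nᶜ : ℝ) + #N = Fintype.card κ := by exact_mod_cast card_compl_add_card N
  linarith

theorem exists_sum_div_card_le [Nonempty κ] (f : κ → ℝ) :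
    ∃ j, (∑ j, f j) / Fintype.card κ ≤ f j := by
  obtain ⟨j, -, hj⟩ := exists_le_of_sum_le (f := fun _ => (∑ j, f j) / Fintype.card κ) (g := f)
    univ_nonempty (by simp [mul_div_cancel₀])
  exact ⟨j, hj⟩

theorem exists_inv_sq_le_of_row_sum [Nonempty κ] {x : κ → ℝ} {ρ μ : ℝ} (hμ : 1 ≤ μ)
    (hρ : 1 ≤ μ * ρ) (hx : ∑ j, x j = ρ) :
    ∃ j, ((Fintype.card κ * μ) ^ 2)⁻¹ ≤ x j := by
  obtain ⟨j, hj⟩ := exists_sum_div_card_le x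
  refine ⟨j, le_trans ?_ hj⟩
  have hm : (1 : ℝ) ≤ Fintype.card κ := by exact_mod_cast Fintype.card_pos
  rw [hx, inv_le_iff_one_le_mul₀ (by positivity)]
  calc (1 : ℝ) ≤ Fintype.card κ * μ * (μ * ρ) := one_le_mul_of_one_le_of_one_le (by nlinarith) hρ
    _ = ρ / Fintype.card κ * (Fintype.card κ * μ) ^ 2 := by field_simp

theorem mul_sum_lt_mul_sum_add_one [DecidableEq κ] {X : Matrix ι κ ℝ} {r : ι → ℝ}
    {c : κ → ℝ} {μ : ℝ} (hμ : 1 ≤ μ) (hr : ∀ i, 1 ≤ μ * r i) (hc0 : ∀ j, 0 ≤ c j)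
    (hc : ∀ j, c j ≤ 1) (hrc : ∑ i, r i = ∑ j, c j) (hX : ∀ i j, 0 ≤ X i j)
    (hXrow : ∀ i, ∑ j, X i j = r i) (hXcol : ∑ j, |∑ i, X i j - c j| ≤ 1 / (2 * μ))
    {A : Finset ι} {N : Finset κ} (hA : A.Nonempty) (hN : N.Nonempty)
    (hAN : ∀ i ∈ A, ∀ j ∈ Nᶜ, X i j < ((Fintype.card κ * μ) ^ 2)⁻¹) :
    μ * ∑ i ∈ A, r i < μ * ∑ j ∈ N, c j + 1 := by
  set m := Fintype.card κ
  set a := ∑ i ∈ A, r i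
  set b := ∑ j ∈ Nᶜ, c j
  set s := a + b - ∑ j, c j with hs
  have hμ0 : 0 < μ := by linarith
  have hNc : ∑ j ∈ N, c j = ∑ j, c j - b := by rw [← sum_add_sum_compl N c]; ring
  by_contra! hgap
  replace hgap : 1 ≤ μ * s := by rw [hNc] at hgap; linear_combination hgap
  have hsa : s ≤ a := by
    linarith [sum_le_sum_of_subset_of_nonneg (subset_univ Nᶜ) fun j _ _ => hc0 j]
  have haR : a ≤ ∑ j, c j := hrc ▸ sum_le_sum_of_subset_of_nonneg (subset_univ A)
    fun i _ _ => (mul_nonneg_iff_of_pos_left hμ0).1 (by linarith [hr i])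
  have ham : a ≤ m := by
    linarith [show ∑ j, c j ≤ m by simpa using sum_le_card_nsmul univ c 1 fun j _ => hc j]
  have hBm : (#Nᶜ : ℝ) ≤ m - a + s := by linarith [card_compl_le_sub_sum hc N]
  have hB1 : (#Nᶜ : ℝ) ≤ m - 1 := by
    have : ((#Nᶜ + 1 : ℕ) : ℝ) ≤ m := by exact_mod_cast (card_compl_lt_iff_nonempty N).2 hN
    push_cast at this
    linarith
  have hBne : Nᶜ.Nonempty := by
    rw [nonempty_iff_ne_empty]
    intro h
    have hb : b = 0 := by simp [b, h]
    nlinarith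
  have hm : (0 : ℝ) < m := by exact_mod_cast Fintype.card_pos_iff.2 ⟨hN.choose⟩
  have hmass := sum_lt_of_forall_block_lt hX hXrow hXcol hA hBne hAN
  have hθ : ((m * μ : ℝ) ^ 2)⁻¹ * (m * μ) ^ 2 = 1 := inv_mul_cancel₀ (by positivity)
  have key : m ^ 2 * (μ * s - 1 / 2) < a * #Nᶜ :=
    calc m ^ 2 * (μ * s - 1 / 2) = (s - 1 / (2 * μ)) * (m ^ 2 * μ) := by field_simp
      _ < μ * a * #Nᶜ * ((m * μ : ℝ) ^ 2)⁻¹ * (m ^ 2 * μ) := by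
        refine mul_lt_mul_of_pos_right ?_ (by positivity)
        have : (#A : ℝ) * #Nᶜ * ((m * μ : ℝ) ^ 2)⁻¹ ≤ μ * a * #Nᶜ * ((m * μ : ℝ) ^ 2)⁻¹ := by
          gcongr
          exact card_le_mul_sum hr A
        linarith
      _ = a * #Nᶜ * (((m * μ : ℝ) ^ 2)⁻¹ * (m * μ) ^ 2) := by ring
      _ = a * #Nᶜ := by rw [hθ, mul_one]
  linarith [mul_le_sq_mul_of_deficit hμ hgap hsa ham (Nat.cast_nonneg _) hB1 hBm]

theorem sum_le_sum_biUnion_of_col_error [DecidableEq κ] [Nonempty κ] {X : Matrix ι κ ℝ}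
    {r : ι → ℝ} {c : κ → ℝ} {μ : ℝ} {k : ι → ℕ} {l : κ → ℕ} (hμ : 1 ≤ μ)
    (hk : ∀ i, μ * r i = k i) (hl : ∀ j, μ * c j = l j) (hk0 : ∀ i, 0 < k i)
    (hc : ∀ j, c j ≤ 1) (hrc : ∑ i, r i = ∑ j, c j) (hX : ∀ i j, 0 ≤ X i j)
    (hXrow : ∀ i, ∑ j, X i j = r i) (hXcol : ∑ j, |∑ i, X i j - c j| ≤ 1 / (2 * μ))
    (A : Finset ι) :
    ∑ i ∈ A, k i ≤ ∑ j ∈ A.biUnion fun i => {j | ((Fintype.card κ * μ) ^ 2)⁻¹ ≤ X i j}, l j := by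
  set N := A.biUnion fun i => {j | ((Fintype.card κ * μ) ^ 2)⁻¹ ≤ X i j}
  rcases A.eq_empty_or_nonempty with rfl | ⟨i₀, hi₀⟩
  · simp
  have hμ0 : 0 < μ := by linarith
  have hr : ∀ i, 1 ≤ μ * r i := fun i => by rw [hk i]; exact_mod_cast hk0 i
  have hc0 : ∀ j, 0 ≤ c j := fun j =>
    (mul_nonneg_iff_of_pos_left hμ0).1 (hl j ▸ Nat.cast_nonneg _)
  have hN : N.Nonempty := by
    obtain ⟨j, hj⟩ := exists_inv_sq_le_of_row_sum hμ (hr i₀) (hXrow i₀)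
    exact ⟨j, mem_biUnion.2 ⟨i₀, hi₀, by simpa using hj⟩⟩
  have hAN : ∀ i ∈ A, ∀ j ∈ Nᶜ, X i j < ((Fintype.card κ * μ) ^ 2)⁻¹ := fun i hi j hj => by
    by_contra! h
    exact mem_compl.1 hj (mem_biUnion.2 ⟨i, hi, by simpa using h⟩)
  have h := mul_sum_lt_mul_sum_add_one hμ hr hc0 hc hrc hX hXrow hXcol ⟨i₀, hi₀⟩ hN hAN
  simp only [mul_sum, hk, hl, ← Nat.cast_sum] at h
  exact_mod_cast Nat.lt_add_one_iff.1 (by exact_mod_cast h)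

theorem exists_transport_plan_of_col_error [Nonempty κ] {X : Matrix ι κ ℝ} {r : ι → ℝ}
    {c : κ → ℝ} {μ : ℝ} {k : ι → ℕ} {l : κ → ℕ} (hμ : 1 ≤ μ)
    (hk : ∀ i, μ * r i = k i) (hl : ∀ j, μ * c j = l j) (hk0 : ∀ i, 0 < k i)
    (hc : ∀ j, c j ≤ 1) (hrc : ∑ i, r i = ∑ j, c j) (hX : ∀ i j, 0 ≤ X i j)
    (hXrow : ∀ i, ∑ j, X i j = r i) (hXcol : ∑ j, |∑ i, X i j - c j| ≤ 1 / (2 * μ)) :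
    ∃ Z : Matrix ι κ ℝ, (∀ i j, 0 ≤ Z i j) ∧ (∀ i, ∑ j, Z i j = r i) ∧
      (∀ j, ∑ i, Z i j = c j) ∧ ∀ i j, Z i j ≠ 0 → ((Fintype.card κ * μ) ^ 2)⁻¹ ≤ X i j := by
  classical
  have hμ0 : 0 < μ := by linarith
  have hkl : ∑ i, k i = ∑ j, l j := by
    have : ((∑ i, k i : ℕ) : ℝ) = ((∑ j, l j : ℕ) : ℝ) := by
      simp only [Nat.cast_sum, ← hk, ← hl, ← mul_sum, hrc]
    exact_mod_cast this
  obtain ⟨Y, hYrow, hYcol, hYsupp⟩ := exists_nat_matrix_of_hall_s4 _ k l hkl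
    (sum_le_sum_biUnion_of_col_error hμ hk hl hk0 hc hrc hX hXrow hXcol)
  refine ⟨fun i j => Y i j / μ, fun i j => by positivity, fun i => ?_, fun j => ?_,
    fun i j hij => ?_⟩
  · rw [← sum_div, ← Nat.cast_sum, hYrow, ← hk, mul_div_cancel_left₀ _ hμ0.ne']
  · rw [← sum_div, ← Nat.cast_sum, hYcol, ← hl, mul_div_cancel_left₀ _ hμ0.ne']
  · simpa using hYsupp i j fun h => hij (by simp [h])

theorem sum_sum_mul_add_of_marginals {Z : Matrix ι κ ℝ} {r : ι → ℝ} {c : κ → ℝ}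
    (hZrow : ∀ i, ∑ j, Z i j = r i) (hZcol : ∀ j, ∑ i, Z i j = c j) (α : ι → ℝ) (β : κ → ℝ) :
    ∑ i, ∑ j, Z i j * (α i + β j) = ∑ i, r i * α i + ∑ j, c j * β j := by
  simp only [mul_add, sum_add_distrib, ← sum_mul, hZrow]
  rw [sum_comm]
  simp only [← sum_mul, hZcol]

theorem sum_sum_mul_le_of_support {Z Q : Matrix ι κ ℝ} {r : ι → ℝ} {c : κ → ℝ} {α : ι → ℝ}
    {β : κ → ℝ} {η θ : ℝ} (hη : 0 < η) (hθ : 0 < θ) (hZ : ∀ i j, 0 ≤ Z i j)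
    (hZrow : ∀ i, ∑ j, Z i j = r i) (hZcol : ∀ j, ∑ i, Z i j = c j)
    (hsupp : ∀ i j, Z i j ≠ 0 → θ ≤ exp (η * (α i + β j - Q i j))) :
    ∑ i, ∑ j, Z i j * Q i j ≤ ∑ i, r i * α i + ∑ j, c j * β j - log θ / η * ∑ i, r i := by
  have hQ : ∀ i j, Z i j * Q i j ≤ Z i j * ((α i - log θ / η) + β j) := fun i j => by
    rcases eq_or_ne (Z i j) 0 with h | h
    · simp [h]
    have hlog := (log_le_iff_le_exp hθ).2 (hsupp i j h)
    have : log θ / η ≤ α i + β j - Q i j := by rw [div_le_iff₀ hη]; linarith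
    exact mul_le_mul_of_nonneg_left (by linarith) (hZ i j)
  calc ∑ i, ∑ j, Z i j * Q i j ≤ ∑ i, ∑ j, Z i j * ((α i - log θ / η) + β j) :=
        sum_le_sum fun i _ => sum_le_sum fun j _ => hQ i j
    _ = ∑ i, r i * (α i - log θ / η) + ∑ j, c j * β j :=
        sum_sum_mul_add_of_marginals hZrow hZcol _ _
    _ = ∑ i, r i * α i + ∑ j, c j * β j - log θ / η * ∑ i, r i := by
        simp only [mul_sub, sum_sub_distrib, ← sum_mul]
        ring

theorem sInf_transport_costs_le {Q Z : Matrix ι κ ℝ} {r : ι → ℝ} {c : κ → ℝ}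
    (hZ : ∀ i j, 0 ≤ Z i j) (hZrow : ∀ i, ∑ j, Z i j = r i) (hZcol : ∀ j, ∑ i, Z i j = c j) :
    sInf {v : ℝ | ∃ W : Matrix ι κ ℝ, (∀ i j, 0 ≤ W i j) ∧ (∀ i, ∑ j, W i j = r i) ∧
        (∀ j, ∑ i, W i j = c j) ∧ v = ∑ i, ∑ j, W i j * Q i j} ≤
      ∑ i, ∑ j, Z i j * Q i j := by
  refine csInf_le ⟨-∑ i, ∑ j, r i * |Q i j|, ?_⟩ ⟨Z, hZ, hZrow, hZcol, rfl⟩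
  rintro _ ⟨W, hW, hWrow, -, rfl⟩
  have hentry : ∀ i j, -(r i * |Q i j|) ≤ W i j * Q i j := fun i j => by
    have : W i j ≤ r i := hWrow i ▸ single_le_sum (fun j _ => hW i j) (mem_univ j)
    nlinarith [neg_abs_le (Q i j), abs_nonneg (Q i j), hW i j]
  simpa [sum_neg_distrib] using sum_le_sum fun i _ => sum_le_sum fun j _ => hentry i j

end

theorem exists_pos_nat_eq_of_int {x : ℝ} (hx : 0 < x) (h : ∃ z : ℤ, x = z) :
    ∃ k : ℕ, 0 < k ∧ x = k := by
  obtain ⟨z, rfl⟩ := h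
  lift z to ℕ using (by exact_mod_cast hx.le)
  exact ⟨z, by exact_mod_cast hx, by simp⟩

theorem stmt_4_general (n m : ℕ) (hm : 0 < m)
    (Q : Matrix (Fin n) (Fin m) ℝ) (r : Fin n → ℝ) (c : Fin m → ℝ)
    (hrpos : ∀ i, 0 < r i) (hcpos : ∀ j, 0 < c j)
    (hl1 : ∑ i, |r i| = ∑ j, |c j|)
    (hcinf : ∀ j, |c j| ≤ 1)
    (μ : ℝ) (hμ : 1 ≤ μ)
    (hrint : ∀ i, ∃ k : ℤ, μ * r i = k) (hcint : ∀ j, ∃ k : ℤ, μ * c j = k)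
    (η : ℝ) (hη : 0 < η) (α : Fin n → ℝ) (β : Fin m → ℝ)
    (X : Matrix (Fin n) (Fin m) ℝ)
    (hX : ∀ i j, X i j = Real.exp (η * (α i + β j - Q i j)))
    (hXrow : ∀ i, ∑ j, X i j = r i)
    (hXcol : ∑ j, |(∑ i, X i j) - c j| ≤ 1 / (2 * μ)) :
    sInf {v : ℝ | ∃ Z : Matrix (Fin n) (Fin m) ℝ,
        (∀ i j, 0 ≤ Z i j) ∧ (∀ i, ∑ j, Z i j = r i) ∧
        (∀ j, ∑ i, Z i j = c j) ∧ v = ∑ i, ∑ j, Z i j * Q i j} -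
      (∑ i, r i * α i + ∑ j, c j * β j) ≤
      2 * η⁻¹ * (∑ i, |r i|) * Real.log (m * μ) := by
  have : Nonempty (Fin m) := Fin.pos_iff_nonempty.1 hm
  have hμ0 : 0 < μ := by linarith
  choose k hk0 hk using fun i => exists_pos_nat_eq_of_int (mul_pos hμ0 (hrpos i)) (hrint i)
  choose l _ hl using fun j => exists_pos_nat_eq_of_int (mul_pos hμ0 (hcpos j)) (hcint j)
  have hrabs : ∑ i, |r i| = ∑ i, r i := sum_congr rfl fun i _ => abs_of_pos (hrpos i)
  have hrc : ∑ i, r i = ∑ j, c j := by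
    rw [← hrabs, hl1]
    exact sum_congr rfl fun j _ => abs_of_pos (hcpos j)
  obtain ⟨Z, hZ, hZrow, hZcol, hZX⟩ := exists_transport_plan_of_col_error hμ hk hl hk0
    (fun j => (le_abs_self _).trans (hcinf j)) hrc (fun i j => hX i j ▸ (exp_pos _).le) hXrow hXcol
  have hcost := sum_sum_mul_le_of_support hη (by positivity) hZ hZrow hZcol
    fun i j h => hX i j ▸ hZX i j h
  have hlog : log ((Fintype.card (Fin m) * μ) ^ 2)⁻¹ = -(2 * log (m * μ)) := by
    simp [log_inv, log_pow]
  calc _ ≤ ∑ i, ∑ j, Z i j * Q i j - (∑ i, r i * α i + ∑ j, c j * β j) :=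
        sub_le_sub_right (sInf_transport_costs_le hZ hZrow hZcol) _
    _ ≤ 2 * η⁻¹ * (∑ i, |r i|) * log (m * μ) := by
        rw [hrabs]
        rw [hlog] at hcost
        field_simp at hcost ⊢
        linarith

/-- Duality gap bound when a doubling step of `ExpSinkhorn` triggers:
`OPT − D ≤ 2 η⁻¹ ‖r‖₁ log (m μ)` where `D = Σ r i α i + Σ c j β j`. -/
theorem stmt_4 (n m : ℕ) (hn : 0 < n) (hm : 0 < m)
    (Q : Matrix (Fin n) (Fin m) ℝ) (r : Fin n → ℝ) (c : Fin m → ℝ)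
    (hrpos : ∀ i, 0 < r i) (hcpos : ∀ j, 0 < c j)
    (hl1 : ∑ i, |r i| = ∑ j, |c j|)
    (hrinf : ∀ i, |r i| ≤ 1) (hcinf : ∀ j, |c j| ≤ 1)
    (μ : ℝ) (hμ : 1 ≤ μ)
    (hrint : ∀ i, ∃ k : ℤ, μ * r i = k) (hcint : ∀ j, ∃ k : ℤ, μ * c j = k)
    (η : ℝ) (hη : 0 < η) (α : Fin n → ℝ) (β : Fin m → ℝ)
    (X : Matrix (Fin n) (Fin m) ℝ)
    (hX : ∀ i j, X i j = Real.exp (η * (α i + β j - Q i j)))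
    (hX1 : ∀ i j, X i j ≤ 1)
    (hXrow : ∀ i, ∑ j, X i j = r i)
    (hXcol : ∑ j, |(∑ i, X i j) - c j| ≤ 1 / (2 * μ)) :
    sInf {v : ℝ | ∃ Z : Matrix (Fin n) (Fin m) ℝ,
        (∀ i j, 0 ≤ Z i j) ∧ (∀ i, ∑ j, Z i j = r i) ∧
        (∀ j, ∑ i, Z i j = c j) ∧ v = ∑ i, ∑ j, Z i j * Q i j} -
      (∑ i, r i * α i + ∑ j, c j * β j) ≤
      2 * η⁻¹ * (∑ i, |r i|) * Real.log (m * μ) :=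
  stmt_4_general n m hm Q r c hrpos hcpos hl1 hcinf μ hμ hrint hcint η hη α β X hX hXrow hXcol
end

section
/- Let n be a positive integer and let r, a ∈ ℝ^n be vectors with strictly positive entries such that ‖a‖₁ ≤ ‖r‖₁, and let μ > 0 be a real number such that μ·r has all integer entries. Then −Σ_{i∈[n]} r_i log(a_i / r_i) ≥ (1/10) · min{ 1/μ , ‖a − r‖₁² / ‖r‖₁ }. -/
/-!
With `t = r / a`, the elementary inequality `(t - 1)² ≤ 2 max(t, 1) klFun t`, where
`klFun t = t log t + 1 - t`, gives `(a - r)² ≤ 2 (r + a) · a klFun (r / a)` coordinatewise, and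
`a klFun (r / a) = r log (r / a) + a - r`. Cauchy–Schwarz turns this into the Pinsker-type bound
`‖a - r‖₁² ≤ 2 ‖r + a‖₁ · Σ (r log (r / a) + a - r) ≤ 4 ‖r‖₁ · Σ r log (r / a)` when
`‖a‖₁ ≤ ‖r‖₁`, so the dual increase is at least `‖a - r‖₁² / (4 ‖r‖₁)`.
-/

open Real Finset

namespace InformationTheory

lemma antitoneOn_two_mul_klFun_sub_sq :
    AntitoneOn (fun x ↦ 2 * klFun x - (x - 1) ^ 2) (Set.Ici 0) := by
  refine antitoneOn_of_hasDerivWithinAt_nonpos (f' := fun x ↦ 2 * log x - 2 * (x - 1))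
    (convex_Ici 0) (by unfold klFun; fun_prop) (fun x hx ↦ ?_) (fun x hx ↦ ?_)
  all_goals rw [interior_Ici] at hx
  · have := ((hasDerivAt_klFun hx.ne').const_mul 2).sub ((hasDerivAt_id x).sub_const 1 |>.pow 2)
    exact (this.congr_deriv (by simp)).hasDerivWithinAt
  · linarith [log_le_sub_one_of_pos hx]

lemma monotoneOn_two_mul_mul_klFun_sub_sq :
    MonotoneOn (fun x ↦ 2 * x * klFun x - (x - 1) ^ 2) (Set.Ici 0) := by
  refine monotoneOn_of_hasDerivWithinAt_nonneg (f' := fun x ↦ 4 * klFun x)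
    (convex_Ici 0) (by unfold klFun; fun_prop) (fun x hx ↦ ?_) (fun x hx ↦ ?_)
  all_goals rw [interior_Ici] at hx
  · have := (((hasDerivAt_id x).const_mul 2).mul (hasDerivAt_klFun hx.ne')).sub
      ((hasDerivAt_id x).sub_const 1 |>.pow 2)
    exact (this.congr_deriv (by simp [klFun]; ring)).hasDerivWithinAt
  · exact mul_nonneg zero_le_four (klFun_nonneg hx.le)

lemma sq_sub_one_le_two_mul_max_mul_klFun {t : ℝ} (ht : 0 ≤ t) :
    (t - 1) ^ 2 ≤ 2 * max t 1 * klFun t := by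
  rcases le_total t 1 with h | h
  · have := antitoneOn_two_mul_klFun_sub_sq ht (Set.mem_Ici.2 zero_le_one) h
    simp only [klFun_one, max_eq_right h] at this ⊢
    linarith
  · have := monotoneOn_two_mul_mul_klFun_sub_sq (Set.mem_Ici.2 zero_le_one) ht h
    simp only [klFun_one, max_eq_left h] at this ⊢
    linarith

lemma sq_sub_le_two_mul_add_mul_mul_klFun_div {r a : ℝ} (hr : 0 ≤ r) (ha : 0 < a) :
    (a - r) ^ 2 ≤ 2 * (r + a) * (a * klFun (r / a)) := by
  have ht : 0 ≤ r / a := div_nonneg hr ha.le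
  have hmax : max (r / a) 1 ≤ r / a + 1 := max_le (by linarith) (by linarith)
  calc (a - r) ^ 2 = a ^ 2 * (r / a - 1) ^ 2 := by field_simp; ring
    _ ≤ a ^ 2 * (2 * (r / a + 1) * klFun (r / a)) := by
        gcongr
        exact (sq_sub_one_le_two_mul_max_mul_klFun ht).trans (by gcongr; exact klFun_nonneg ht)
    _ = 2 * (r + a) * (a * klFun (r / a)) := by field_simp

lemma mul_klFun_div {r a : ℝ} (ha : a ≠ 0) :
    a * klFun (r / a) = r * log (r / a) + a - r := by
  rw [klFun]; field_simp

lemma mul_log_div_add_sub_nonneg {r a : ℝ} (hr : 0 ≤ r) (ha : 0 < a) :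
    0 ≤ r * log (r / a) + a - r :=
  mul_klFun_div ha.ne' ▸ mul_nonneg ha.le (klFun_nonneg (div_nonneg hr ha.le))

section Finset

variable {ι : Type*} (s : Finset ι) {r a : ι → ℝ}

lemma sq_sum_abs_sub_le (hr : ∀ i ∈ s, 0 ≤ r i) (ha : ∀ i ∈ s, 0 < a i) :
    (∑ i ∈ s, |a i - r i|) ^ 2 ≤
      2 * (∑ i ∈ s, (r i + a i)) * ∑ i ∈ s, (r i * log (r i / a i) + a i - r i) := by
  rw [mul_sum s (fun i ↦ r i + a i) 2]
  refine sum_sq_le_sum_mul_sum_of_sq_le_mul (R := ℝ) s (fun i hi ↦ ?_) (fun i hi ↦ ?_)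
    (fun i hi ↦ ?_)
  · linarith [hr i hi, ha i hi]
  · exact mul_log_div_add_sub_nonneg (hr i hi) (ha i hi)
  · rw [sq_abs, ← mul_klFun_div (ha i hi).ne']
    exact sq_sub_le_two_mul_add_mul_mul_klFun_div (hr i hi) (ha i hi)

lemma sum_mul_log_div_add_sub_nonneg (hr : ∀ i ∈ s, 0 ≤ r i) (ha : ∀ i ∈ s, 0 < a i) :
    0 ≤ ∑ i ∈ s, (r i * log (r i / a i) + a i - r i) :=
  sum_nonneg fun i hi ↦ mul_log_div_add_sub_nonneg (hr i hi) (ha i hi)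

lemma sum_mul_log_div_nonneg (hr : ∀ i ∈ s, 0 ≤ r i) (ha : ∀ i ∈ s, 0 < a i)
    (hsum : ∑ i ∈ s, a i ≤ ∑ i ∈ s, r i) :
    0 ≤ ∑ i ∈ s, r i * log (r i / a i) := by
  have := sum_mul_log_div_add_sub_nonneg s hr ha
  rw [sum_sub_distrib, sum_add_distrib] at this
  linarith

lemma sq_sum_abs_sub_div_sum_le (hr : ∀ i ∈ s, 0 ≤ r i) (ha : ∀ i ∈ s, 0 < a i)
    (hsum : ∑ i ∈ s, a i ≤ ∑ i ∈ s, r i) :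
    (∑ i ∈ s, |a i - r i|) ^ 2 / ∑ i ∈ s, r i ≤ 4 * ∑ i ∈ s, r i * log (r i / a i) := by
  have hexcess := sum_mul_log_div_add_sub_nonneg s hr ha
  have hpinsker := sq_sum_abs_sub_le s hr ha
  rw [sum_sub_distrib, sum_add_distrib] at hexcess hpinsker
  rw [sum_add_distrib] at hpinsker
  have hR := sum_nonneg hr
  refine div_le_of_le_mul₀ hR (by linarith) (hpinsker.trans ?_)
  calc _ ≤ 2 * (2 * ∑ i ∈ s, r i) * ∑ i ∈ s, r i * log (r i / a i) := by
        gcongr <;> linarith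
    _ = _ := by ring

end Finset

end InformationTheory

theorem stmt_5_general (n : ℕ) (r a : Fin n → ℝ)
    (hr : ∀ i, 0 < r i) (ha : ∀ i, 0 < a i)
    (h1 : ∑ i, |a i| ≤ ∑ i, |r i|)
    (μ : ℝ) :
    -(∑ i, r i * Real.log (a i / r i)) ≥
      (1/10 : ℝ) * min (1 / μ) ((∑ i, |a i - r i|) ^ 2 / ∑ i, |r i|) := by
  simp only [abs_of_pos (hr _), abs_of_pos (ha _)] at h1 ⊢
  have hr' : ∀ i ∈ univ, 0 ≤ r i := fun i _ ↦ (hr i).le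
  have ha' : ∀ i ∈ univ, 0 < a i := fun i _ ↦ ha i
  have hflip : -(∑ i, r i * log (a i / r i)) = ∑ i, r i * log (r i / a i) := by
    simp only [← sum_neg_distrib, ← inv_div (r _), log_inv, mul_neg, neg_neg]
  have hnonneg := InformationTheory.sum_mul_log_div_nonneg univ hr' ha' h1
  have hbound := InformationTheory.sq_sum_abs_sub_div_sum_le univ hr' ha' h1
  rw [ge_iff_le, hflip]
  calc 1 / 10 * min (1 / μ) ((∑ i, |a i - r i|) ^ 2 / ∑ i, r i)
      ≤ 1 / 10 * ((∑ i, |a i - r i|) ^ 2 / ∑ i, r i) := by gcongr; exact min_le_right _ _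
    _ ≤ ∑ i, r i * log (r i / a i) := by linarith

/-- Lower bound on the dual increase of a Sinkhorn row-scaling step. -/
theorem stmt_5 (n : ℕ) (hn : 0 < n) (r a : Fin n → ℝ)
    (hr : ∀ i, 0 < r i) (ha : ∀ i, 0 < a i)
    (h1 : ∑ i, |a i| ≤ ∑ i, |r i|)
    (μ : ℝ) (hμ : 0 < μ) (hrint : ∀ i, ∃ k : ℤ, μ * r i = k) :
    -(∑ i, r i * Real.log (a i / r i)) ≥
      (1/10 : ℝ) * min (1 / μ) ((∑ i, |a i - r i|) ^ 2 / ∑ i, |r i|) :=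
  stmt_5_general n r a hr ha h1 μ
end

section
/- Let n, m be positive integers, Q ∈ ℝ^{n×m}, and let r ∈ ℝ^n, c ∈ ℝ^m be vectors with nonnegative entries satisfying ‖r‖₁ = ‖c‖₁. Then min_{X ∈ U(r,c)} ⟨X, Q⟩ = sup { Σ_{i∈[n]} r_i α_i + Σ_{j∈[m]} c_j β_j : α ∈ ℝ^n, β ∈ ℝ^m, α_i + β_j ≤ Q_{ij} for all i ∈ [n], j ∈ [m] }, and the minimum on the left-hand side is attained. -/
/-!
Weak duality is `b ⬝ᵥ y = (y ᵥ* A) ⬝ᵥ x ≤ q ⬝ᵥ x` for a primal feasible `x`. For strong duality,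
separate `(b, μ)`, with `μ` below the primal optimum, from the cone
`{(A x, q ⬝ᵥ x + s) | x, s ≥ 0}`: the separating functional `(a, τ)` has `τ > 0` because the primal problem is feasible, and `-a / τ`
is a dual solution of value `> μ`. The cone is closed, and the primal feasible set compact, because
`0 ≤ x` and `A x = 0` force `x = 0`; for the transport problem, whose constraint matrix records row
and column sums, this holds since a nonnegative plan with zero row sums vanishes.
-/

open Bornology Matrix

section ConeImage

variable {E F : Type*}

theorem IsClosed.image_of_isBounded_inter_preimage [PseudoMetricSpace E] [ProperSpace E]
    [MetricSpace F] {C : Set E} (hC : IsClosed C) {f : E → F} (hf : Continuous f)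
    (hbdd : ∀ s, IsBounded s → IsBounded (C ∩ f ⁻¹' s)) : IsClosed (f '' C) := by
  refine isClosed_of_closure_subset fun y hy => ?_
  obtain ⟨u, hu, hlim⟩ := mem_closure_iff_seq_limit.1 hy
  choose x hxC hxu using hu
  obtain ⟨z, hz, φ, hφ, hxφ⟩ := tendsto_subseq_of_bounded (x := x)
    (hbdd _ (Metric.isBounded_range_of_tendsto u hlim)) fun k => ⟨hxC k, k, (hxu k).symm⟩
  have hzC : z ∈ C := hC.closure_subset (closure_mono Set.inter_subset_left hz)
  refine ⟨z, hzC, tendsto_nhds_unique ((hf.tendsto z).comp hxφ) ?_⟩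
  simpa only [Function.comp_def, hxu] using hlim.comp hφ.tendsto_atTop

variable [NormedAddCommGroup E] [NormedSpace ℝ E] [FiniteDimensional ℝ E]
  [NormedAddCommGroup F] [NormedSpace ℝ F]

theorem isBounded_cone_inter_preimage {C : Set E} (hC : IsClosed C)
    (hcone : ∀ x ∈ C, ∀ t : ℝ, 0 < t → t • x ∈ C) (f : E →L[ℝ] F)
    (hf : ∀ x ∈ C, f x = 0 → x = 0) {s : Set F} (hs : IsBounded s) :
    IsBounded (C ∩ f ⁻¹' s) := by
  obtain ⟨δ, hδ, hδS⟩ : ∃ δ > 0, ∀ y ∈ C ∩ Metric.sphere 0 1, δ ≤ ‖f y‖ := by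
    rcases (C ∩ Metric.sphere (0 : E) 1).eq_empty_or_nonempty with h | hne
    · exact ⟨1, one_pos, by simp [h]⟩
    obtain ⟨y₀, hy₀, hmin⟩ := ((isCompact_sphere 0 1).inter_left hC).exists_isMinOn hne
      (by fun_prop : Continuous fun y => ‖f y‖).continuousOn
    refine ⟨‖f y₀‖, norm_pos_iff.2 fun h => ?_, fun y hy => hmin hy⟩
    simp [hf y₀ hy₀.1 h] at hy₀
  obtain ⟨R, hR⟩ := hs.exists_norm_le
  refine isBounded_iff_forall_norm_le.2 ⟨δ⁻¹ * R, fun x ⟨hx, hfx⟩ => ?_⟩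
  rcases eq_or_ne x 0 with rfl | hx0
  · simpa using mul_nonneg (inv_nonneg.2 hδ.le) ((norm_nonneg _).trans (hR _ hfx))
  have hunit : ‖x‖⁻¹ • x ∈ C ∩ Metric.sphere 0 1 :=
    ⟨hcone x hx _ (by positivity), by simp [norm_smul, hx0]⟩
  have hδx : ‖x‖ * δ ≤ ‖f x‖ := by
    have := hδS _ hunit
    rwa [map_smul, norm_smul, norm_inv, norm_norm, le_inv_mul_iff₀ (norm_pos_iff.2 hx0)] at this
  rw [le_inv_mul_iff₀ hδ]
  linarith [hR _ hfx]

end ConeImage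

section LinearProgramming

variable {ι κ : Type*} [Fintype ι]

theorem StrongDual.apply_pi_prod [Fintype κ] [DecidableEq κ] (f : StrongDual ℝ ((κ → ℝ) × ℝ))
    (v : κ → ℝ) (t : ℝ) : f (v, t) = (fun k => f (Pi.single k 1, 0)) ⬝ᵥ v + t * f (0, 1) := by
  have hdecomp : (v, t) = ∑ k, v k • ((Pi.single k 1 : κ → ℝ), (0 : ℝ)) + t • (0, 1) := by
    ext k <;> simp [Prod.fst_sum, Prod.snd_sum, Finset.sum_apply, Pi.single_apply]
  rw [hdecomp, map_add, map_sum]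
  simp only [map_smul, smul_eq_mul, dotProduct, mul_comm]

theorem nonneg_of_forall_nonneg_dotProduct [DecidableEq ι] {w : ι → ℝ}
    (h : ∀ x, 0 ≤ x → 0 ≤ w ⬝ᵥ x) : 0 ≤ w :=
  fun i => by simpa using h (Pi.single i 1) (Pi.single_nonneg.2 zero_le_one)

noncomputable def lpConeMap (A : Matrix κ ι ℝ) (q : ι → ℝ) : (ι → ℝ) × ℝ →L[ℝ] (κ → ℝ) × ℝ :=
  LinearMap.toContinuousLinearMap
    { toFun := fun p => (A *ᵥ p.1, q ⬝ᵥ p.1 + p.2)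
      map_add' := fun p p' => by
        simp only [Prod.fst_add, Prod.snd_add, mulVec_add, dotProduct_add, Prod.mk_add_mk]
        ring_nf
      map_smul' := fun t p => by simp [mulVec_smul, dotProduct_smul, mul_add] }

@[simp] lemma lpConeMap_apply (A : Matrix κ ι ℝ) (q : ι → ℝ) (p : (ι → ℝ) × ℝ) :
    lpConeMap A q p = (A *ᵥ p.1, q ⬝ᵥ p.1 + p.2) := rfl

variable [Fintype κ] {A : Matrix κ ι ℝ} {b : κ → ℝ} {q : ι → ℝ}

theorem isClosed_lpConeMap_image (hA : ∀ x, 0 ≤ x → A *ᵥ x = 0 → x = 0) :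
    IsClosed (lpConeMap A q '' Set.Ici 0) := by
  refine isClosed_Ici.image_of_isBounded_inter_preimage (lpConeMap A q).continuous fun s hs =>
    isBounded_cone_inter_preimage isClosed_Ici (fun p hp t ht => smul_nonneg ht.le hp) _ ?_ hs
  rintro ⟨x, s⟩ ⟨hx, hs⟩ h
  simp only [lpConeMap_apply, Prod.mk_eq_zero] at h
  obtain rfl := hA x hx h.1
  simpa using h.2

theorem exists_separating_of_forall_lt (hA : ∀ x, 0 ≤ x → A *ᵥ x = 0 → x = 0) {μ : ℝ}
    (hμ : ∀ x, 0 ≤ x → A *ᵥ x = b → μ < q ⬝ᵥ x) :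
    ∃ (a : κ → ℝ) (τ : ℝ), 0 ≤ τ ∧ 0 ≤ a ᵥ* A + τ • q ∧ a ⬝ᵥ b + μ * τ < 0 := by
  classical
  let K : ProperCone ℝ ((κ → ℝ) × ℝ) :=
    ⟨(PointedCone.positive ℝ _).map (lpConeMap A q).toLinearMap, isClosed_lpConeMap_image hA⟩
  have hbμ : (b, μ) ∉ K := by
    change (b, μ) ∉ lpConeMap A q '' Set.Ici 0
    rintro ⟨⟨x, s⟩, hxs, h⟩
    simp only [lpConeMap_apply, Prod.mk.injEq] at h
    linarith [hμ x hxs.1 h.1, show 0 ≤ s from hxs.2]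
  obtain ⟨f, hfK, hfb⟩ := K.hyperplane_separation_point hbμ
  have hgen (x : ι → ℝ) (s : ℝ) (hx : 0 ≤ x) (hs : 0 ≤ s) :
      0 ≤ ((fun k => f (Pi.single k 1, 0)) ᵥ* A + f (0, 1) • q) ⬝ᵥ x + s * f (0, 1) := by
    have := hfK (lpConeMap A q (x, s)) ⟨(x, s), ⟨hx, hs⟩, rfl⟩
    rw [lpConeMap_apply, StrongDual.apply_pi_prod, dotProduct_mulVec] at this
    simp only [add_dotProduct, smul_dotProduct, smul_eq_mul]
    linarith
  refine ⟨_, _, by simpa using hgen 0 1 le_rfl zero_le_one,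
    nonneg_of_forall_nonneg_dotProduct fun x hx => by simpa using hgen x 0 hx le_rfl, ?_⟩
  rwa [StrongDual.apply_pi_prod] at hfb

theorem exists_dual_gt_of_forall_lt (hA : ∀ x, 0 ≤ x → A *ᵥ x = 0 → x = 0) {x₀ : ι → ℝ}
    (hx₀ : 0 ≤ x₀) (hAx₀ : A *ᵥ x₀ = b) {μ : ℝ} (hμ : ∀ x, 0 ≤ x → A *ᵥ x = b → μ < q ⬝ᵥ x) :
    ∃ y, y ᵥ* A ≤ q ∧ μ < b ⬝ᵥ y := by
  obtain ⟨a, τ, hτ, hdual, hab⟩ := exists_separating_of_forall_lt hA hμ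
  rcases hτ.eq_or_lt with rfl | hτ
  · have := dotProduct_nonneg_of_nonneg hdual hx₀
    rw [zero_smul, add_zero, ← dotProduct_mulVec, hAx₀] at this
    linarith
  refine ⟨-τ⁻¹ • a, fun i => ?_, ?_⟩
  · have := hdual i
    simp only [smul_vecMul, Pi.smul_apply, Pi.add_apply, Pi.zero_apply, smul_eq_mul] at this ⊢
    rw [neg_mul, neg_le, ← sub_nonneg]
    field_simp
    linarith
  · rw [dotProduct_smul, dotProduct_comm, smul_eq_mul, neg_mul, lt_neg, ← sub_pos]
    field_simp
    linarith

theorem dotProduct_le_of_vecMul_le {x : ι → ℝ} {y : κ → ℝ} (hy : y ᵥ* A ≤ q) (hx : 0 ≤ x)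
    (hAx : A *ᵥ x = b) : b ⬝ᵥ y ≤ q ⬝ᵥ x := by
  rw [← hAx, dotProduct_comm, dotProduct_mulVec]
  exact dotProduct_le_dotProduct_of_nonneg_right hy hx

theorem isLeast_primal_sSup_dual (hA : ∀ x, 0 ≤ x → A *ᵥ x = 0 → x = 0)
    (hfeas : ∃ x, 0 ≤ x ∧ A *ᵥ x = b) :
    IsLeast {v | ∃ x, 0 ≤ x ∧ A *ᵥ x = b ∧ v = q ⬝ᵥ x}
      (sSup {d | ∃ y, y ᵥ* A ≤ q ∧ d = b ⬝ᵥ y}) := by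
  have hP : IsCompact {x : ι → ℝ | 0 ≤ x ∧ A *ᵥ x = b} :=
    Metric.isCompact_of_isClosed_isBounded
      (isClosed_Ici.inter (isClosed_eq (continuous_const.matrix_mulVec continuous_id)
        continuous_const))
      (isBounded_cone_inter_preimage isClosed_Ici (fun x hx t ht => smul_nonneg ht.le hx)
        (mulVecLin A).toContinuousLinearMap hA isBounded_singleton)
  obtain ⟨x', ⟨hx', hAx'⟩, hmin⟩ :=
    hP.exists_isMinOn hfeas (continuous_const.dotProduct continuous_id).continuousOn
  have hdual : ∀ w < q ⬝ᵥ x', ∃ y, y ᵥ* A ≤ q ∧ w < b ⬝ᵥ y := fun w hw =>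
    exists_dual_gt_of_forall_lt hA hx' hAx' fun x hx hAx => hw.trans_le (hmin ⟨hx, hAx⟩)
  have hsup : sSup {d | ∃ y, y ᵥ* A ≤ q ∧ d = b ⬝ᵥ y} = q ⬝ᵥ x' := by
    refine csSup_eq_of_forall_le_of_forall_lt_exists_gt ?_ ?_ fun w hw => ?_
    · obtain ⟨y, hy, -⟩ := hdual _ (sub_one_lt _)
      exact ⟨_, y, hy, rfl⟩
    · rintro _ ⟨y, hy, rfl⟩
      exact dotProduct_le_of_vecMul_le hy hx' hAx'
    · obtain ⟨y, hy, hwy⟩ := hdual w hw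
      exact ⟨_, ⟨y, hy, rfl⟩, hwy⟩
  rw [hsup]
  refine ⟨⟨x', hx', hAx', rfl⟩, ?_⟩
  rintro _ ⟨x, hx, hAx, rfl⟩
  exact hmin ⟨hx, hAx⟩

end LinearProgramming

section Transport

variable {m n : Type*} [Fintype m] [Fintype n] [DecidableEq m] [DecidableEq n]

variable (m n) in
def transportMatrix : Matrix (m ⊕ n) (m × n) ℝ :=
  fromRows (of fun i p => if p.1 = i then 1 else 0) (of fun j p => if p.2 = j then 1 else 0)

theorem transportMatrix_mulVec (x : m × n → ℝ) :
    transportMatrix m n *ᵥ x = Sum.elim (fun i => ∑ j, x (i, j)) (fun j => ∑ i, x (i, j)) := by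
  ext (i | j)
  · simp [transportMatrix, mulVec, dotProduct, Fintype.sum_prod_type]
    rw [Finset.sum_comm]
    simp
  · simp [transportMatrix, mulVec, dotProduct, Fintype.sum_prod_type]

theorem sumElim_vecMul_transportMatrix (α : m → ℝ) (β : n → ℝ) :
    Sum.elim α β ᵥ* transportMatrix m n = fun p => α p.1 + β p.2 := by
  ext p; simp [transportMatrix, vecMul, dotProduct]

theorem transportMatrix_mulVec_eq_zero {x : m × n → ℝ} (hx : 0 ≤ x)
    (h : transportMatrix m n *ᵥ x = 0) : x = 0 := by
  ext ⟨i, j⟩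
  have hrow : ∑ j, x (i, j) = 0 := by simpa [transportMatrix_mulVec] using congrFun h (.inl i)
  exact (Finset.sum_eq_zero_iff_of_nonneg fun j _ => hx (i, j)).1 hrow j (Finset.mem_univ j)

theorem transportMatrix_mulVec_eq_sumElim_iff {x : m × n → ℝ} {r : m → ℝ} {c : n → ℝ} :
    transportMatrix m n *ᵥ x = Sum.elim r c ↔
      (∀ i, ∑ j, x (i, j) = r i) ∧ ∀ j, ∑ i, x (i, j) = c j := by
  simp [transportMatrix_mulVec, funext_iff, Sum.forall]

theorem exists_transportPlan {r : m → ℝ} {c : n → ℝ} (hr : 0 ≤ r) (hc : 0 ≤ c)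
    (hmass : ∑ i, r i = ∑ j, c j) : ∃ x, 0 ≤ x ∧ transportMatrix m n *ᵥ x = Sum.elim r c := by
  set T := ∑ i, r i
  have hT : 0 ≤ T := Finset.sum_nonneg fun i _ => hr i
  have hscale {d : ℝ} (hd : 0 ≤ d) (hdT : d ≤ T) : d * T / T = d := by
    rcases eq_or_ne T 0 with h | h
    · simp only [h, mul_zero, div_zero]
      linarith
    · field_simp
  -- The product coupling; for `T = 0` it is `0` (division by zero), as are `r` and `c`.
  refine ⟨fun p => r p.1 * c p.2 / T, fun p => div_nonneg (mul_nonneg (hr _) (hc _)) hT, ?_⟩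
  rw [transportMatrix_mulVec_eq_sumElim_iff]
  refine ⟨fun i => ?_, fun j => ?_⟩
  · dsimp only
    rw [← Finset.sum_div, ← Finset.mul_sum, ← hmass]
    exact hscale (hr i) (Finset.single_le_sum (fun i _ => hr i) (Finset.mem_univ i))
  · dsimp only
    rw [← Finset.sum_div, ← Finset.sum_mul, mul_comm]
    exact hscale (hc j) (hmass ▸ Finset.single_le_sum (fun j _ => hc j) (Finset.mem_univ j))

theorem transport_primalValues_eq (Q : Matrix m n ℝ) (r : m → ℝ) (c : n → ℝ) :
    {v : ℝ | ∃ X : Matrix m n ℝ,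
      (∀ i j, 0 ≤ X i j) ∧ (∀ i, ∑ j, X i j = r i) ∧
      (∀ j, ∑ i, X i j = c j) ∧ v = ∑ i, ∑ j, X i j * Q i j} =
      {v | ∃ x, 0 ≤ x ∧ transportMatrix m n *ᵥ x = Sum.elim r c ∧
        v = (fun p : m × n => Q p.1 p.2) ⬝ᵥ x} := by
  ext v
  constructor
  · rintro ⟨X, hX, hrow, hcol, rfl⟩
    refine ⟨fun p => X p.1 p.2, fun p => hX _ _,
      transportMatrix_mulVec_eq_sumElim_iff.2 ⟨hrow, hcol⟩, ?_⟩
    simp [dotProduct, Fintype.sum_prod_type, mul_comm]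
  · rintro ⟨x, hx, hAx, rfl⟩
    obtain ⟨hrow, hcol⟩ := transportMatrix_mulVec_eq_sumElim_iff.1 hAx
    refine ⟨of fun i j => x (i, j), fun i j => hx _, hrow, hcol, ?_⟩
    simp [dotProduct, Fintype.sum_prod_type, mul_comm]

theorem transport_dualValues_eq (Q : Matrix m n ℝ) (r : m → ℝ) (c : n → ℝ) :
    {d : ℝ | ∃ (α : m → ℝ) (β : n → ℝ),
      (∀ i j, α i + β j ≤ Q i j) ∧ d = ∑ i, r i * α i + ∑ j, c j * β j} =
      {d | ∃ y, y ᵥ* transportMatrix m n ≤ (fun p : m × n => Q p.1 p.2) ∧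
        d = Sum.elim r c ⬝ᵥ y} := by
  ext d
  constructor
  · rintro ⟨α, β, hαβ, rfl⟩
    refine ⟨Sum.elim α β, ?_, (sumElim_dotProduct_sumElim ..).symm⟩
    rw [sumElim_vecMul_transportMatrix]
    exact fun p => hαβ p.1 p.2
  · rintro ⟨y, hy, rfl⟩
    rw [← Sum.elim_comp_inl_inr y, sumElim_vecMul_transportMatrix] at hy
    rw [← Sum.elim_comp_inl_inr y]
    exact ⟨y ∘ .inl, y ∘ .inr, fun i j => hy (i, j), sumElim_dotProduct_sumElim ..⟩

theorem isLeast_transportCost_sSup_dual (Q : Matrix m n ℝ) {r : m → ℝ} {c : n → ℝ}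
    (hr : 0 ≤ r) (hc : 0 ≤ c) (hmass : ∑ i, r i = ∑ j, c j) :
    IsLeast {v : ℝ | ∃ X : Matrix m n ℝ,
        (∀ i j, 0 ≤ X i j) ∧ (∀ i, ∑ j, X i j = r i) ∧
        (∀ j, ∑ i, X i j = c j) ∧ v = ∑ i, ∑ j, X i j * Q i j}
      (sSup {d : ℝ | ∃ (α : m → ℝ) (β : n → ℝ),
        (∀ i j, α i + β j ≤ Q i j) ∧
        d = ∑ i, r i * α i + ∑ j, c j * β j}) := by
  rw [transport_primalValues_eq, transport_dualValues_eq]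
  exact isLeast_primal_sSup_dual (fun x hx => transportMatrix_mulVec_eq_zero hx)
    (exists_transportPlan hr hc hmass)

end Transport

theorem stmt_10_general (n m : ℕ)
    (Q : Matrix (Fin n) (Fin m) ℝ) (r : Fin n → ℝ) (c : Fin m → ℝ)
    (hr : ∀ i, 0 ≤ r i) (hc : ∀ j, 0 ≤ c j)
    (hl1 : ∑ i, |r i| = ∑ j, |c j|) :
    IsLeast {v : ℝ | ∃ X : Matrix (Fin n) (Fin m) ℝ,
        (∀ i j, 0 ≤ X i j) ∧ (∀ i, ∑ j, X i j = r i) ∧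
        (∀ j, ∑ i, X i j = c j) ∧ v = ∑ i, ∑ j, X i j * Q i j}
      (sSup {d : ℝ | ∃ (α : Fin n → ℝ) (β : Fin m → ℝ),
        (∀ i j, α i + β j ≤ Q i j) ∧
        d = ∑ i, r i * α i + ∑ j, c j * β j}) :=
  isLeast_transportCost_sSup_dual Q hr hc (by simpa [abs_of_nonneg, hr, hc] using hl1)

/-- Strong LP duality for optimal transport: the primal minimum is
attained and equals the supremum of the dual program. -/
theorem stmt_10 (n m : ℕ) (hn : 0 < n) (hm : 0 < m)
    (Q : Matrix (Fin n) (Fin m) ℝ) (r : Fin n → ℝ) (c : Fin m → ℝ)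
    (hr : ∀ i, 0 ≤ r i) (hc : ∀ j, 0 ≤ c j)
    (hl1 : ∑ i, |r i| = ∑ j, |c j|) :
    IsLeast {v : ℝ | ∃ X : Matrix (Fin n) (Fin m) ℝ,
        (∀ i j, 0 ≤ X i j) ∧ (∀ i, ∑ j, X i j = r i) ∧
        (∀ j, ∑ i, X i j = c j) ∧ v = ∑ i, ∑ j, X i j * Q i j}
      (sSup {d : ℝ | ∃ (α : Fin n → ℝ) (β : Fin m → ℝ),
        (∀ i j, α i + β j ≤ Q i j) ∧
        d = ∑ i, r i * α i + ∑ j, c j * β j}) :=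
  stmt_10_general n m Q r c hr hc hl1
end
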